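/- Let f : ℝ → [0,∞) be a measurable probability density (∫_ℝ f dλ = 1) with cumulative distribution function F(x) = ∫_{−∞}^x f(t) dt, and let μ = f·λ. Fix an integer m ≥ 2 and let T : ℝ^m → ℝ² map x to (min_{1≤k≤m} x_k, max_{1≤k≤m} x_k). Then the pushforward of the product measure μ^{⊗m} under T is absolutely continuous with respect to two-dimensional Lebesgue measure, with density g(a,b) = m(m−1)·(F(b) − F(a))^{m−2}·f(a)·f(b) for a ≤ b, and g(a,b) = 0 for a > b. -/

import Mathlib

/-!
Rectangles `[a, ∞) × (-∞, b]` form a generating π-system of `ℝ × ℝ`, so it suffices to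
compare both measures on them. The event `min ≥ a, max ≤ b` says that every coordinate lies
in `[a, b]`, so its mass is `(F b - F a) ^ m`. On the other side, `F` is absolutely continuous
with `F' = f` almost everywhere, so the fundamental theorem of calculus for absolutely
continuous functions integrates `(F t - F s) ^ (m - 2) * f t` in `t ∈ [s, b]` and then
`(F b - F s) ^ (m - 1) * f s` in `s ∈ [a, b]`, giving the same value.
-/

open MeasureTheory Set

theorem absolutelyContinuousOnInterval_const {X : Type*} [PseudoMetricSpace X] (c : X)
    (a b : ℝ) : AbsolutelyContinuousOnInterval (fun _ : ℝ => c) a b :=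
  (LipschitzWith.const c).lipschitzOnWith.absolutelyContinuousOnInterval

namespace AbsolutelyContinuousOnInterval

theorem pow {f : ℝ → ℝ} {a b : ℝ} (hf : AbsolutelyContinuousOnInterval f a b) :
    ∀ n : ℕ, AbsolutelyContinuousOnInterval (fun x => f x ^ n) a b
  | 0 => by simpa using absolutelyContinuousOnInterval_const (1 : ℝ) a b
  | n + 1 => by simpa only [pow_succ] using (hf.pow n).fun_mul hf

theorem integral_comp_mul_eq_sub {F f φ φ' : ℝ → ℝ} {a b : ℝ}
    (hφF : AbsolutelyContinuousOnInterval (φ ∘ F) a b) (hφ : ∀ y, HasDerivAt φ (φ' y) y)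
    (hF : ∀ᵐ x, HasDerivAt F (f x) x) :
    ∫ x in a..b, φ' (F x) * f x = φ (F b) - φ (F a) := by
  refine (intervalIntegral.integral_congr_ae ?_).trans hφF.integral_deriv_eq_sub
  filter_upwards [hF] with x hx _
  exact ((hφ (F x)).comp x hx).deriv.symm

end AbsolutelyContinuousOnInterval

theorem lintegral_Icc_ofReal_eq_intervalIntegral {h : ℝ → ℝ} {a b : ℝ} (hab : a ≤ b)
    (hi : IntervalIntegrable h volume a b) (hnn : ∀ x ∈ Ioc a b, 0 ≤ h x) :
    ∫⁻ x in Icc a b, ENNReal.ofReal (h x) = ENNReal.ofReal (∫ x in a..b, h x) := by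
  rw [intervalIntegral.integral_of_le hab,
    ofReal_integral_eq_lintegral_ofReal hi.1 ((ae_restrict_mem measurableSet_Ioc).mono hnn),
    setLIntegral_congr Ioc_ae_eq_Icc]

section MinMax

variable {ι α : Type*} [Fintype ι] [Nonempty ι] [ConditionallyCompleteLinearOrder α]

theorem preimage_iInf_iSup_Ici_prod_Iic (a b : α) :
    (fun x : ι → α => (⨅ k, x k, ⨆ k, x k)) ⁻¹' (Ici a ×ˢ Iic b) =
      univ.pi fun _ => Icc a b := by
  ext x
  simp [le_ciInf_iff (finite_range x).bddBelow, ciSup_le_iff (finite_range x).bddAbove,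
    Pi.le_def]

variable [TopologicalSpace α] [OrderTopology α] [SecondCountableTopology α] [MeasurableSpace α]
  [BorelSpace α]

theorem map_iInf_iSup_pi_Ici_prod_Iic (ν : Measure α) [SigmaFinite ν] (a b : α) :
    (Measure.pi fun _ : ι => ν).map (fun x => (⨅ k, x k, ⨆ k, x k)) (Ici a ×ˢ Iic b) =
      ν (Icc a b) ^ Fintype.card ι := by
  rw [Measure.map_apply (by fun_prop) (measurableSet_Ici.prod measurableSet_Iic),
    preimage_iInf_iSup_Ici_prod_Iic, Measure.pi_pi, Finset.prod_const, Finset.card_univ]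

end MinMax

theorem MeasureTheory.Measure.ext_of_Ici_prod_Iic {μ ν : Measure (ℝ × ℝ)}
    [IsFiniteMeasure μ] (h : ∀ a b : ℝ, μ (Ici a ×ˢ Iic b) = ν (Ici a ×ˢ Iic b)) : μ = ν := by
  have hIci : IsCountablySpanning (range (Ici : ℝ → Set ℝ)) :=
    ⟨fun k : ℕ => Ici (-k), fun k => mem_range_self _,
      iUnion_eq_univ_iff.2 fun x => (exists_nat_ge (-x)).imp fun _ hk => neg_le.1 hk⟩
  have hIic : IsCountablySpanning (range (Iic : ℝ → Set ℝ)) :=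
    ⟨fun k : ℕ => Iic k, fun k => mem_range_self _,
      iUnion_eq_univ_iff.2 fun x => exists_nat_ge x⟩
  refine Measure.ext_of_generateFrom_of_iUnion _ (fun k : ℕ => Ici (-k : ℝ) ×ˢ Iic (k : ℝ))
    (generateFrom_eq_prod (borel_eq_generateFrom_Ici ℝ ▸ BorelSpace.measurable_eq).symm
      (borel_eq_generateFrom_Iic ℝ ▸ BorelSpace.measurable_eq).symm hIci hIic).symm
    (isPiSystem_Ici.prod isPiSystem_Iic) ?_
    (fun k => mem_image2_of_mem (mem_range_self _) (mem_range_self _))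
    (fun _ => measure_ne_top _ _) ?_
  · refine iUnion_eq_univ_iff.2 fun q => ?_
    obtain ⟨k, hk⟩ := exists_nat_ge (max (-q.1) q.2)
    exact ⟨k, neg_le.1 ((le_max_left _ _).trans hk), (le_max_right _ _).trans hk⟩
  · rintro _ ⟨_, ⟨a, rfl⟩, _, ⟨b, rfl⟩, rfl⟩
    exact h a b

noncomputable def minMaxDensity (f F : ℝ → ℝ) (m : ℕ) (q : ℝ × ℝ) : ℝ :=
  if q.1 ≤ q.2 then (m : ℝ) * ((m : ℝ) - 1) * (F q.2 - F q.1) ^ (m - 2) * f q.1 * f q.2 else 0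

theorem measurable_minMaxDensity {f F : ℝ → ℝ} (hf : Measurable f) (hF : Measurable F)
    (m : ℕ) : Measurable (minMaxDensity f F m) :=
  Measurable.ite (measurableSet_le measurable_fst measurable_snd) (by fun_prop) measurable_const

section CDF

variable {f F : ℝ → ℝ} (hf : Integrable f) (hF : ∀ x, F x = ∫ t in Iic x, f t)
include hf hF

theorem sub_eq_intervalIntegral_of_eq_integral_Iic (a b : ℝ) :
    F b - F a = ∫ t in a..b, f t := by
  rw [hF, hF, intervalIntegral.integral_Iic_sub_Iic hf.integrableOn hf.integrableOn]

theorem eq_add_intervalIntegral_of_eq_integral_Iic (a : ℝ) :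
    F = fun x => F a + ∫ t in a..x, f t :=
  funext fun x => by linarith [sub_eq_intervalIntegral_of_eq_integral_Iic hf hF a x]

theorem absolutelyContinuousOnInterval_of_eq_integral_Iic (a b : ℝ) :
    AbsolutelyContinuousOnInterval F a b := by
  rw [eq_add_intervalIntegral_of_eq_integral_Iic hf hF a]
  exact (absolutelyContinuousOnInterval_const _ _ _).fun_add
    (hf.intervalIntegrable.absolutelyContinuousOnInterval_intervalIntegral left_mem_uIcc)

theorem continuous_of_eq_integral_Iic : Continuous F := by
  rw [eq_add_intervalIntegral_of_eq_integral_Iic hf hF 0]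
  exact continuous_const.add
    (intervalIntegral.continuous_primitive (fun _ _ => hf.intervalIntegrable) 0)

theorem ae_hasDerivAt_of_eq_integral_Iic : ∀ᵐ x, HasDerivAt F (f x) x := by
  filter_upwards [LocallyIntegrable.ae_hasDerivAt_integral hf.locallyIntegrable] with x hx
  rw [eq_add_intervalIntegral_of_eq_integral_Iic hf hF 0]
  exact (hx 0).const_add _

theorem integral_sub_pow_mul_of_eq_integral_Iic (a b c : ℝ) (n : ℕ) :
    ∫ t in a..b, (F t - c) ^ n * f t = ((F b - c) ^ (n + 1) - (F a - c) ^ (n + 1)) / (n + 1) := by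
  have hφ (y : ℝ) :
      HasDerivAt (fun y => ((n : ℝ) + 1)⁻¹ * (y - c) ^ (n + 1)) ((y - c) ^ n) y := by
    refine ((((hasDerivAt_id' y).sub_const c).fun_pow (n + 1)).const_mul
      ((n : ℝ) + 1)⁻¹).congr_deriv ?_
    rw [Nat.add_sub_cancel]; push_cast; field_simp
  have hφF : AbsolutelyContinuousOnInterval
      ((fun y => ((n : ℝ) + 1)⁻¹ * (y - c) ^ (n + 1)) ∘ F) a b :=
    AbsolutelyContinuousOnInterval.const_mul ((n : ℝ) + 1)⁻¹
    (((absolutelyContinuousOnInterval_of_eq_integral_Iic hf hF a b).fun_sub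
      (absolutelyContinuousOnInterval_const c a b)).pow (n + 1))
  rw [AbsolutelyContinuousOnInterval.integral_comp_mul_eq_sub hφF hφ
    (ae_hasDerivAt_of_eq_integral_Iic hf hF)]
  ring

theorem integral_pow_sub_mul_of_eq_integral_Iic (a b c : ℝ) (n : ℕ) :
    ∫ t in a..b, (c - F t) ^ n * f t = ((c - F a) ^ (n + 1) - (c - F b) ^ (n + 1)) / (n + 1) := by
  have hφ (y : ℝ) :
      HasDerivAt (fun y => -((n : ℝ) + 1)⁻¹ * (c - y) ^ (n + 1)) ((c - y) ^ n) y := by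
    refine ((((hasDerivAt_id' y).const_sub c).fun_pow (n + 1)).const_mul
      (-((n : ℝ) + 1)⁻¹)).congr_deriv ?_
    rw [Nat.add_sub_cancel]; push_cast; field_simp
  have hφF : AbsolutelyContinuousOnInterval
      ((fun y => -((n : ℝ) + 1)⁻¹ * (c - y) ^ (n + 1)) ∘ F) a b :=
    AbsolutelyContinuousOnInterval.const_mul (-((n : ℝ) + 1)⁻¹)
    (((absolutelyContinuousOnInterval_const c a b).fun_sub
      (absolutelyContinuousOnInterval_of_eq_integral_Iic hf hF a b)).pow (n + 1))
  rw [AbsolutelyContinuousOnInterval.integral_comp_mul_eq_sub hφF hφ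
    (ae_hasDerivAt_of_eq_integral_Iic hf hF)]
  ring

variable (hf_nonneg : ∀ x, 0 ≤ f x)
include hf_nonneg

theorem monotone_of_eq_integral_Iic : Monotone F := fun a b hab => by
  rw [← sub_nonneg, sub_eq_intervalIntegral_of_eq_integral_Iic hf hF]
  exact intervalIntegral.integral_nonneg hab fun t _ => hf_nonneg t

theorem lintegral_Icc_pow_mul_of_eq_integral_Iic (a b : ℝ) {m : ℕ} (hm : m ≠ 0) :
    ∫⁻ s in Icc a b, ENNReal.ofReal (m * (F b - F s) ^ (m - 1) * f s) =
      ENNReal.ofReal (F b - F a) ^ m := by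
  obtain ⟨n, rfl⟩ := Nat.exists_eq_succ_of_ne_zero hm
  have hmono := monotone_of_eq_integral_Iic hf hF hf_nonneg
  rcases le_or_gt a b with hab | hba
  · have hi : IntervalIntegrable (fun s => (n + 1) * ((F b - F s) ^ n * f s)) volume a b :=
      (hf.intervalIntegrable.continuousOn_mul ((continuous_const.sub
        (continuous_of_eq_integral_Iic hf hF)).pow n).continuousOn).const_mul _
    simp_rw [Nat.succ_sub_one, Nat.cast_succ, mul_assoc]
    rw [lintegral_Icc_ofReal_eq_intervalIntegral hab hi fun s hs =>
        mul_nonneg n.cast_add_one_pos.le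
          (mul_nonneg (pow_nonneg (sub_nonneg.2 (hmono hs.2)) n) (hf_nonneg s)),
      intervalIntegral.integral_const_mul, integral_pow_sub_mul_of_eq_integral_Iic hf hF,
      ← ENNReal.ofReal_pow (sub_nonneg.2 (hmono hab))]
    congr 1
    field_simp
    ring
  · rw [Icc_eq_empty hba.not_ge, Measure.restrict_empty, lintegral_zero_measure,
      ENNReal.ofReal_of_nonpos (sub_nonpos.2 (hmono hba.le)), zero_pow hm]

theorem withDensity_Icc_of_eq_integral_Iic (a b : ℝ) :
    volume.withDensity (fun x => ENNReal.ofReal (f x)) (Icc a b) = ENNReal.ofReal (F b - F a) := by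
  rw [withDensity_apply _ measurableSet_Icc]
  simpa using lintegral_Icc_pow_mul_of_eq_integral_Iic hf hF hf_nonneg a b one_ne_zero

theorem lintegral_Iic_minMaxDensity {m : ℕ} (hm : 2 ≤ m) (s b : ℝ) :
    ∫⁻ t in Iic b, ENNReal.ofReal (minMaxDensity f F m (s, t)) =
      (Iic b).indicator (fun s => ENNReal.ofReal (m * (F b - F s) ^ (m - 1) * f s)) s := by
  obtain ⟨n, rfl⟩ : ∃ n, m = n + 2 := ⟨m - 2, by omega⟩
  have hmono := monotone_of_eq_integral_Iic hf hF hf_nonneg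
  have hind : (fun t => ENNReal.ofReal (minMaxDensity f F (n + 2) (s, t))) = (Ici s).indicator
      fun t => ENNReal.ofReal ((n + 2) * (n + 1) * f s * ((F t - F s) ^ n * f t)) := by
    funext t
    by_cases hst : s ≤ t
    · simp only [minMaxDensity, if_pos hst, indicator_of_mem (mem_Ici.2 hst)]
      congr 1
      push_cast
      ring
    · simp [minMaxDensity, hst]
  rw [hind, lintegral_indicator measurableSet_Ici, Measure.restrict_restrict measurableSet_Ici,
    Ici_inter_Iic]
  rcases le_or_gt s b with hsb | hbs
  · have hi : IntervalIntegrable (fun t => (n + 2) * (n + 1) * f s * ((F t - F s) ^ n * f t))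
        volume s b :=
      (hf.intervalIntegrable.continuousOn_mul (((continuous_of_eq_integral_Iic hf hF).sub
        continuous_const).pow n).continuousOn).const_mul _
    rw [indicator_of_mem (mem_Iic.2 hsb), lintegral_Icc_ofReal_eq_intervalIntegral hsb hi
      fun t ht => mul_nonneg (mul_nonneg (by positivity) (hf_nonneg s))
        (mul_nonneg (pow_nonneg (sub_nonneg.2 (hmono ht.1.le)) n) (hf_nonneg t)),
      intervalIntegral.integral_const_mul, integral_sub_pow_mul_of_eq_integral_Iic hf hF]
    congr 1
    push_cast
    field_simp
    ring
  · rw [indicator_of_notMem (notMem_Iic.2 hbs), Icc_eq_empty hbs.not_ge, Measure.restrict_empty,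
      lintegral_zero_measure]

theorem withDensity_minMaxDensity_Ici_prod_Iic (hf_meas : Measurable f) {m : ℕ} (hm : 2 ≤ m)
    (a b : ℝ) :
    volume.withDensity (fun q => ENNReal.ofReal (minMaxDensity f F m q)) (Ici a ×ˢ Iic b) =
      ENNReal.ofReal (F b - F a) ^ m := by
  have hmeas := (measurable_minMaxDensity hf_meas
    (continuous_of_eq_integral_Iic hf hF).measurable m).ennreal_ofReal
  rw [withDensity_apply _ (measurableSet_Ici.prod measurableSet_Iic), Measure.volume_eq_prod,
    ← Measure.prod_restrict, lintegral_prod _ hmeas.aemeasurable]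
  simp only [lintegral_Iic_minMaxDensity hf hF hf_nonneg hm]
  rw [lintegral_indicator measurableSet_Iic, Measure.restrict_restrict measurableSet_Iic,
    Iic_inter_Ici, lintegral_Icc_pow_mul_of_eq_integral_Iic hf hF hf_nonneg a b (by omega)]

end CDF

/-- Let `f` be a probability density on ℝ with cdf `F`, and let
`μ = f·λ`. For `m ≥ 2`, the pushforward of `μ^{⊗m}` under
`x ↦ (min_k x_k, max_k x_k)` is absolutely continuous w.r.t. two-dimensional Lebesgue
measure, with density `g(a,b) = m(m−1)(F b − F a)^{m−2} f a f b` for `a ≤ b`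
and `g(a,b) = 0` for `a > b`. -/
theorem minmax_pushforward_density (f : ℝ → ℝ) (hf_nonneg : ∀ x, 0 ≤ f x)
    (hf_meas : Measurable f) (hf_prob : ∫ x, f x = 1)
    (F : ℝ → ℝ) (hF : ∀ x, F x = ∫ t in Set.Iic x, f t)
    (m : ℕ) (hm : 2 ≤ m) :
    Measure.map (fun x : Fin m → ℝ => (⨅ k, x k, ⨆ k, x k))
        (Measure.pi fun _ : Fin m => volume.withDensity fun x => ENNReal.ofReal (f x)) =
      volume.withDensity fun q : ℝ × ℝ =>
        ENNReal.ofReal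
          (if q.1 ≤ q.2 then
            (m : ℝ) * ((m : ℝ) - 1) * (F q.2 - F q.1) ^ (m - 2) * f q.1 * f q.2
          else 0) := by
  have hf : Integrable f := .of_integral_ne_zero (by rw [hf_prob]; exact one_ne_zero)
  have : IsFiniteMeasure (volume.withDensity fun x => ENNReal.ofReal (f x)) :=
    isFiniteMeasure_withDensity_ofReal hf.2
  have : Nonempty (Fin m) := ⟨⟨0, by omega⟩⟩
  refine Measure.ext_of_Ici_prod_Iic fun a b => ?_
  rw [map_iInf_iSup_pi_Ici_prod_Iic, withDensity_Icc_of_eq_integral_Iic hf hF hf_nonneg,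
    Fintype.card_fin]
  exact (withDensity_minMaxDensity_Ici_prod_Iic hf hF hf_nonneg hf_meas hm a b).symm
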